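/- A closed path P in Y is reduced if and only if its image π(P) in the quotient graph of groups 𝕏 = Y//G is reduced. -/

import Mathlib

structure LegGraph where
  V : Type
  H : Type
  [fV : Fintype V]
  [fH : Fintype H]
  [dV : DecidableEq V]
  [dH : DecidableEq H]
  r : H → V
  bar : H → H
  bar_bar : ∀ h, bar (bar h) = h

attribute [instance] LegGraph.fV LegGraph.fH LegGraph.dV LegGraph.dH

namespace LegGraph

def IsClosedPath (X : LegGraph) {n : ℕ} (h : ZMod n → X.H) : Prop :=
  ∀ j, X.r (h (j + 1)) = X.r (X.bar (h j))

def IsReducedPath (X : LegGraph) {n : ℕ} (h : ZMod n → X.H) : Prop :=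
  ∀ j, h (j + 1) ≠ X.bar (h j)

def HasPeriod (X : LegGraph) {n : ℕ} (h : ZMod n → X.H) (d : ℕ) : Prop :=
  ∀ j, h (j + (d : ZMod n)) = h j

def IsPrimitive (X : LegGraph) {n : ℕ} (h : ZMod n → X.H) : Prop :=
  ∀ d : ℕ, 0 < d → d ∣ n → X.HasPeriod h d → d = n

end LegGraph

/-- An edge-free Galois covering of graphs with legs: a group `G` acting on a finite
graph `Y`, freely on half-edges, together with the quotient graph `X = Y/G`, a lifted
spanning tree (recorded via the vertex section `vT`), a choice of identity sheet
(recorded via the half-edge section `sec`) and the Frobenius elements `F(h)`, as in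
the construction of the quotient graph of groups `𝕏 = Y ⫽ G`. -/
structure EdgeFreeCover where
  Y : LegGraph
  G : Type
  [grpG : Group G]
  [finG : Fintype G]
  [decG : DecidableEq G]
  act : G → Y.H → Y.H
  actV : G → Y.V → Y.V
  act_one : ∀ h, act 1 h = h
  act_mul : ∀ g g' h, act (g * g') h = act g (act g' h)
  actV_one : ∀ v, actV 1 v = v
  actV_mul : ∀ g g' v, actV (g * g') v = actV g (actV g' v)
  act_r : ∀ g h, Y.r (act g h) = actV g (Y.r h)
  act_bar : ∀ g h, Y.bar (act g h) = act g (Y.bar h)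
  free : ∀ g h, act g h = h → g = 1
  X : LegGraph
  πV : Y.V → X.V
  πH : Y.H → X.H
  πV_surj : Function.Surjective πV
  πH_r : ∀ f, X.r (πH f) = πV (Y.r f)
  πH_bar : ∀ f, X.bar (πH f) = πH (Y.bar f)
  πH_eq : ∀ f f', πH f = πH f' ↔ ∃ g, act g f = f'
  πV_eq : ∀ v v', πV v = πV v' ↔ ∃ g, actV g v = v'
  vT : X.V → Y.V
  vT_sec : ∀ v, πV (vT v) = v
  sec : X.H → Y.H
  sec_sec : ∀ h, πH (sec h) = h
  sec_root : ∀ h, Y.r (sec h) = vT (X.r h)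
  F : X.H → G
  F_bar : ∀ h, F (X.bar h) = (F h)⁻¹
  F_spec : ∀ h, act (F h) (sec (X.bar h)) = Y.bar (sec h)

attribute [instance] EdgeFreeCover.grpG EdgeFreeCover.finG EdgeFreeCover.decG

namespace EdgeFreeCover

variable (E : EdgeFreeCover)

/-- The sheet number `N(f)` of a half-edge `f` of `Y`: the unique `g ∈ G` with
`g · (π f)^S = f`. -/
noncomputable def N (f : E.Y.H) : E.G :=
  Classical.choose ((E.πH_eq (E.sec (E.πH f)) f).mp (E.sec_sec (E.πH f)))

/-- Membership in the vertex group `X_v` of the quotient graph of groups: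
the stabilizer of the chosen lift `v^T`. -/
def InStab (v : E.X.V) (g : E.G) : Prop := E.actV g (E.vT v) = E.vT v

/-- A closed path of length `n` in the quotient graph of groups `𝕏 = Y ⫽ G`,
recorded cyclically: half-edges `h j` and group elements `γ j` (with `γ j` the group
element immediately preceding `h j`), each lying in the vertex group at the root of
`h j`. -/
def IsClosedGPath {n : ℕ} (h : ZMod n → E.X.H) (γ : ZMod n → E.G) : Prop :=
  E.X.IsClosedPath h ∧ ∀ j, E.InStab (E.X.r (h j)) (γ j)

/-- The path `g₀h₁g₁⋯g_{n-1}h_n` is reduced if for every `j` either `h_{j+1} ≠ h̄_j`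
or the intervening group element is nontrivial. -/
def IsReducedGPath {n : ℕ} (h : ZMod n → E.X.H) (γ : ZMod n → E.G) : Prop :=
  ∀ j, h (j + 1) ≠ E.X.bar (h j) ∨ γ (j + 1) ≠ 1

/-- A closed path in `𝕏` has period `d` if it is invariant under rotation by `d`. -/
def GPathHasPeriod {n : ℕ} (h : ZMod n → E.X.H) (γ : ZMod n → E.G) (d : ℕ) : Prop :=
  ∀ j, h (j + (d : ZMod n)) = h j ∧ γ (j + (d : ZMod n)) = γ j

/-- A closed path in `𝕏` is primitive if it is not a proper power. -/
def GPathIsPrimitive {n : ℕ} (h : ZMod n → E.X.H) (γ : ZMod n → E.G) : Prop :=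
  ∀ d : ℕ, 0 < d → d ∣ n → E.GPathHasPeriod h γ d → d = n

/-- The Frobenius element `F(P) = g₀F(h₁)g₁F(h₂)⋯g_{n-1}F(h_n)` of a closed path
in `𝕏` (with chosen basepoint). -/
def Frob {n : ℕ} (h : ZMod n → E.X.H) (γ : ZMod n → E.G) : E.G :=
  (((List.range n).map fun i => γ (i : ZMod n) * E.F (h (i : ZMod n)))).prod

/-- The lift `π⁻¹(Q, s)` of a closed path `Q` in `𝕏` starting on the `s`-th sheet:
its `j`-th half-edge is `s · F(g₀h₁⋯h_j g_j) · h_{j+1}^S`. -/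
def liftPath {n : ℕ} (h : ZMod n → E.X.H) (γ : ZMod n → E.G) (s : E.G)
    (j : ZMod n) : E.Y.H :=
  E.act (s * (((List.range j.val).map fun i => γ (i : ZMod n) * E.F (h (i : ZMod n)))).prod
      * γ j) (E.sec (h j))

/-- The half-edge components of the image `π(P)` of a closed path `P` in `Y`. -/
def imgH {n : ℕ} (f : ZMod n → E.Y.H) (j : ZMod n) : E.X.H := E.πH (f j)

/-- The group components of the image `π(P)` of a closed path `P` in `Y`:
`g_j = F(h_j)⁻¹ N(f_j)⁻¹ N(f_{j+1})` (cyclically, with `g₀ = F(h_n)⁻¹N(f_n)⁻¹N(f₁)`). -/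
noncomputable def imgG {n : ℕ} (f : ZMod n → E.Y.H) (j : ZMod n) : E.G :=
  (E.F (E.πH (f (j - 1))))⁻¹ * (E.N (f (j - 1)))⁻¹ * E.N (f j)

end EdgeFreeCover


/-! A half-edge of `Y` is determined by its image in `X` and its sheet number, and reversing
a half-edge `f` multiplies its sheet number on the right by `F(π f)`. Hence `f_{j+1} = f̄_j`
holds exactly when `h_{j+1} = h̄_j` and `g_{j+1} = 1`. -/

namespace EdgeFreeCover

variable (E : EdgeFreeCover)

lemma act_N_sec (f : E.Y.H) : E.act (E.N f) (E.sec (E.πH f)) = f :=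
  Classical.choose_spec ((E.πH_eq (E.sec (E.πH f)) f).mp (E.sec_sec (E.πH f)))

lemma act_left_injective (x : E.Y.H) : Function.Injective fun g => E.act g x := by
  intro g g' (h : E.act g x = E.act g' x)
  have hfix : E.act (g'⁻¹ * g) x = x := by
    rw [E.act_mul, h, ← E.act_mul, inv_mul_cancel, E.act_one]
  exact (inv_mul_eq_one.mp (E.free _ _ hfix)).symm

lemma N_eq_of_act_sec {f : E.Y.H} {g : E.G} (h : E.act g (E.sec (E.πH f)) = f) : E.N f = g :=
  E.act_left_injective _ ((E.act_N_sec f).trans h.symm)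

lemma N_bar (f : E.Y.H) : E.N (E.Y.bar f) = E.N f * E.F (E.πH f) :=
  E.N_eq_of_act_sec <| by
    rw [← E.πH_bar, E.act_mul, E.F_spec, ← E.act_bar, act_N_sec]

lemma eq_iff_πH_eq_and_N_eq {f f' : E.Y.H} : f = f' ↔ E.πH f = E.πH f' ∧ E.N f = E.N f' := by
  refine ⟨fun h => h ▸ ⟨rfl, rfl⟩, fun ⟨hπ, hN⟩ => ?_⟩
  rw [← E.act_N_sec f, ← E.act_N_sec f', hπ, hN]

lemma eq_bar_iff {f f' : E.Y.H} :
    f' = E.Y.bar f ↔ E.πH f' = E.X.bar (E.πH f) ∧ E.N f' = E.N f * E.F (E.πH f) := by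
  rw [eq_iff_πH_eq_and_N_eq, E.πH_bar, N_bar]

lemma imgG_add_one_eq_one_iff {n : ℕ} (f : ZMod n → E.Y.H) (j : ZMod n) :
    E.imgG f (j + 1) = 1 ↔ E.N (f (j + 1)) = E.N (f j) * E.F (E.πH (f j)) := by
  rw [imgG, add_sub_cancel_right, mul_assoc, inv_mul_eq_one, eq_inv_mul_iff_mul_eq, eq_comm]

end EdgeFreeCover

theorem reduced_iff_image_reduced_general (E : EdgeFreeCover) (n : ℕ)
    (f : ZMod n → E.Y.H) :
    E.Y.IsReducedPath f ↔ E.IsReducedGPath (E.imgH f) (E.imgG f) :=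
  forall_congr' fun j => by
    simp only [ne_eq, E.eq_bar_iff, not_and_or, E.imgG_add_one_eq_one_iff, EdgeFreeCover.imgH]

/-- A closed path `P` in `Y` is reduced if and only if its image `π(P)`
in the quotient graph of groups `𝕏 = Y ⫽ G` is reduced. -/
theorem reduced_iff_image_reduced (E : EdgeFreeCover) (n : ℕ) (hn : 1 ≤ n)
    (f : ZMod n → E.Y.H) (hf : E.Y.IsClosedPath f) :
    E.Y.IsReducedPath f ↔ E.IsReducedGPath (E.imgH f) (E.imgG f) :=
  reduced_iff_image_reduced_general E n f
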